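/- Let (V, ω) be a symplectic vector space of dimension 2n. For k ≤ n−1, the map L: Λ^k V* → Λ^{k+2} V* is injective, and for k ≥ n−1, the map L: Λ^k V* → Λ^{k+2} V* is surjective. -/

import Mathlib

/-!
With a Darboux basis `eⱼ, fⱼ` of `V*`, let `Λ = ∑ⱼ ι_{fⱼ*} ι_{eⱼ*}` be contraction with the dual
bivector. Because `∑ᵢ eᵢ ∧ ι_{eᵢ*}` acts on `⋀ᵖ` as multiplication by `p`, the commutator `[Λ, L]`
acts on `⋀ᵖ` as multiplication by `n - p`, so `[Λ, L^(m+1)] = (m+1)(n-p-m) L^m` on `⋀ᵖ`. Applying `Λ`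
to `L^s x = 0` and inducting on the degree shows that `L^s` is injective on `⋀ᵖ` when `p + s ≤ n`.
Since `dim ⋀ᵖ = dim ⋀^(2n-p)`, `L^(n-p) : ⋀ᵖ → ⋀^(2n-p)` is then bijective, and
`L : ⋀ᵏ → ⋀^(k+2)` for `k ≥ n - 1` is the last factor of such a bijection.
-/

open ExteriorAlgebra Module

theorem LinearMap.surjOn_of_injOn_of_finrank_eq {K V W : Type*} [DivisionRing K]
    [AddCommGroup V] [Module K V] [AddCommGroup W] [Module K W]
    {p : Submodule K V} {q : Submodule K W} [FiniteDimensional K p] [FiniteDimensional K q]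
    (f : V →ₗ[K] W) (hmaps : Set.MapsTo f p q) (hinj : Set.InjOn f p)
    (hrank : finrank K p = finrank K q) : Set.SurjOn f p q := by
  rw [← hmaps.restrict_surjective_iff]
  exact (injective_iff_surjective_of_finrank_eq_finrank hrank (f := f.restrict hmaps)).mp
    (hmaps.restrict_inj.mpr hinj)

namespace ExteriorAlgebra

section CommRing

variable {R M : Type*} [CommRing R] [AddCommGroup M] [Module R M]

theorem ι_mul_mem_exteriorPower_succ (v : M) {p : ℕ} {x : ExteriorAlgebra R M}
    (hx : x ∈ ⋀[R]^p M) : ι R v * x ∈ ⋀[R]^(p + 1) M := by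
  rw [exteriorPower, pow_succ']
  exact Submodule.mul_mem_mul (LinearMap.mem_range_self _ v) hx

theorem ι_mul_ι_comm (u v : M) : ι R u * ι R v = -(ι R v * ι R u) :=
  eq_neg_of_add_eq_zero_left (ι_add_mul_swap u v)

theorem contractLeft_eq_zero_of_mem_exteriorPower_zero (φ : Dual R M) {x : ExteriorAlgebra R M}
    (hx : x ∈ ⋀[R]^0 M) : CliffordAlgebra.contractLeft φ x = 0 := by
  rw [exteriorPower, pow_zero] at hx
  obtain ⟨r, rfl⟩ := Submodule.mem_one.mp hx
  exact CliffordAlgebra.contractLeft_algebraMap ..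

theorem contractLeft_mem_exteriorPower (φ : Dual R M) {p : ℕ} {x : ExteriorAlgebra R M}
    (hx : x ∈ ⋀[R]^(p + 1) M) : CliffordAlgebra.contractLeft φ x ∈ ⋀[R]^p M := by
  induction p generalizing x with
  | zero =>
    rw [exteriorPower, pow_one] at hx
    obtain ⟨v, rfl⟩ := hx
    rw [CliffordAlgebra.contractLeft_ι, exteriorPower, pow_zero]
    exact Submodule.algebraMap_mem _
  | succ p ih =>
    rw [exteriorPower, pow_succ'] at hx
    induction hx using Submodule.mul_induction_on' with
    | mem_mul_mem u hu y hy =>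
      obtain ⟨v, rfl⟩ := hu
      rw [CliffordAlgebra.contractLeft_ι_mul]
      exact sub_mem (Submodule.smul_mem _ _ hy) (ι_mul_mem_exteriorPower_succ v (ih hy))
    | add a _ b _ ha hb => rw [map_add]; exact add_mem ha hb

theorem sum_coord_smul_ι {I : Type*} [Fintype I] (b : Basis I R M) (v : M) :
    ∑ i, b.coord i v • ι R (b i) = ι R v := by
  simp only [Basis.coord_apply, ← map_smul, ← map_sum, b.sum_repr]

theorem sum_ι_mul_contractLeft_coord {I : Type*} [Fintype I] (b : Basis I R M) {p : ℕ}
    {x : ExteriorAlgebra R M} (hx : x ∈ ⋀[R]^p M) :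
    ∑ i, ι R (b i) * CliffordAlgebra.contractLeft (b.coord i) x = (p : R) • x := by
  induction hx using Submodule.pow_induction_on_left' with
  | algebraMap r => simp [CliffordAlgebra.contractLeft_algebraMap]
  | add x y i _ _ hx hy => simp only [map_add, mul_add, Finset.sum_add_distrib, hx, hy, smul_add]
  | mem_mul u hu i x _ ih =>
    obtain ⟨v, rfl⟩ := hu
    calc ∑ j, ι R (b j) * CliffordAlgebra.contractLeft (b.coord j) (ι R v * x)
        = (∑ j, b.coord j v • ι R (b j)) * x
            + ι R v * ∑ j, ι R (b j) * CliffordAlgebra.contractLeft (b.coord j) x := by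
          simp only [CliffordAlgebra.contractLeft_ι_mul, mul_sub, ← mul_assoc, ι_mul_ι_comm _ v,
            Finset.sum_mul, Finset.mul_sum, smul_mul_assoc, mul_smul_comm,
            neg_mul, sub_neg_eq_add, Finset.sum_add_distrib]
      _ = ((i.succ : ℕ) : R) • (ι R v * x) := by
          rw [sum_coord_smul_ι, ih, mul_smul_comm]
          push_cast
          module

section Darboux

variable {κ : Type*} [Fintype κ] (b : Basis (κ × Fin 2) R M)

/-- `∑ⱼ eⱼ ∧ fⱼ` for the Darboux basis `eⱼ = b (j, 0)`, `fⱼ = b (j, 1)`. -/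
noncomputable def darbouxForm : ExteriorAlgebra R M :=
  ∑ j, ι R (b (j, 0)) * ι R (b (j, 1))

noncomputable def lefschetz : Module.End R (ExteriorAlgebra R M) :=
  LinearMap.mulLeft R (darbouxForm b)

noncomputable def dualLefschetz : Module.End R (ExteriorAlgebra R M) :=
  ∑ j, CliffordAlgebra.contractLeft (b.coord (j, 1)) ∘ₗ
    CliffordAlgebra.contractLeft (b.coord (j, 0))

theorem lefschetz_apply (x : ExteriorAlgebra R M) : lefschetz b x = darbouxForm b * x := rfl

theorem dualLefschetz_apply (x : ExteriorAlgebra R M) :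
    dualLefschetz b x = ∑ j, CliffordAlgebra.contractLeft (b.coord (j, 1))
      (CliffordAlgebra.contractLeft (b.coord (j, 0)) x) := by
  simp [dualLefschetz]

theorem lefschetz_pow_mem {p : ℕ} {x : ExteriorAlgebra R M} (hx : x ∈ ⋀[R]^p M) (s : ℕ) :
    (lefschetz b ^ s) x ∈ ⋀[R]^(p + 2 * s) M := by
  induction s with
  | zero => simpa using hx
  | succ s ih =>
    rw [pow_succ', Module.End.mul_apply, lefschetz_apply, darbouxForm, Finset.sum_mul]
    refine Submodule.sum_mem _ fun j _ => ?_
    rw [mul_assoc]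
    exact ι_mul_mem_exteriorPower_succ _ (ι_mul_mem_exteriorPower_succ _ ih)

theorem dualLefschetz_mem {p : ℕ} {x : ExteriorAlgebra R M} (hx : x ∈ ⋀[R]^(p + 2) M) :
    dualLefschetz b x ∈ ⋀[R]^p M :=
  (dualLefschetz_apply b x).symm ▸ Submodule.sum_mem _ fun _ _ =>
    contractLeft_mem_exteriorPower _ (contractLeft_mem_exteriorPower _ hx)

theorem dualLefschetz_eq_zero {p : ℕ} (hp : p ≤ 1) {x : ExteriorAlgebra R M}
    (hx : x ∈ ⋀[R]^p M) : dualLefschetz b x = 0 := by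
  refine (dualLefschetz_apply b x).trans (Finset.sum_eq_zero fun j _ => ?_)
  interval_cases p
  · rw [contractLeft_eq_zero_of_mem_exteriorPower_zero _ hx, map_zero]
  · exact contractLeft_eq_zero_of_mem_exteriorPower_zero _ (contractLeft_mem_exteriorPower _ hx)

theorem contractLeft_darbouxForm_mul (φ : Dual R M) (y : ExteriorAlgebra R M) :
    CliffordAlgebra.contractLeft φ (darbouxForm b * y) =
      darbouxForm b * CliffordAlgebra.contractLeft φ y +
        ∑ j, (φ (b (j, 0)) • (ι R (b (j, 1)) * y) - φ (b (j, 1)) • (ι R (b (j, 0)) * y)) := by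
  simp only [darbouxForm, Finset.sum_mul, map_sum, ← Finset.sum_add_distrib, mul_assoc,
    CliffordAlgebra.contractLeft_ι_mul, mul_sub, mul_smul_comm]
  refine Finset.sum_congr rfl fun j _ => ?_
  abel

theorem contractLeft_coord_fst_darbouxForm_mul (i : κ) (y : ExteriorAlgebra R M) :
    CliffordAlgebra.contractLeft (b.coord (i, 0)) (darbouxForm b * y) =
      darbouxForm b * CliffordAlgebra.contractLeft (b.coord (i, 0)) y + ι R (b (i, 1)) * y := by
  classical
  simp [contractLeft_darbouxForm_mul, Finsupp.single_apply]

theorem contractLeft_coord_snd_darbouxForm_mul (i : κ) (y : ExteriorAlgebra R M) :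
    CliffordAlgebra.contractLeft (b.coord (i, 1)) (darbouxForm b * y) =
      darbouxForm b * CliffordAlgebra.contractLeft (b.coord (i, 1)) y - ι R (b (i, 0)) * y := by
  classical
  simp [contractLeft_darbouxForm_mul, Finsupp.single_apply, sub_eq_add_neg]

theorem dualLefschetz_darbouxForm_mul (y : ExteriorAlgebra R M) :
    dualLefschetz b (darbouxForm b * y) = darbouxForm b * dualLefschetz b y
      + (Fintype.card κ : R) • y
      - ∑ m, ι R (b m) * CliffordAlgebra.contractLeft (b.coord m) y := by
  have hterm : ∀ j, CliffordAlgebra.contractLeft (b.coord (j, 1))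
      (CliffordAlgebra.contractLeft (b.coord (j, 0)) (darbouxForm b * y)) =
        darbouxForm b * CliffordAlgebra.contractLeft (b.coord (j, 1))
          (CliffordAlgebra.contractLeft (b.coord (j, 0)) y) + y
        - (ι R (b (j, 0)) * CliffordAlgebra.contractLeft (b.coord (j, 0)) y
          + ι R (b (j, 1)) * CliffordAlgebra.contractLeft (b.coord (j, 1)) y) := by
    intro j
    rw [contractLeft_coord_fst_darbouxForm_mul, map_add, contractLeft_coord_snd_darbouxForm_mul,
      CliffordAlgebra.contractLeft_ι_mul, Basis.coord_apply, Basis.repr_self,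
      Finsupp.single_eq_same, one_smul]
    abel
  simp only [dualLefschetz_apply, hterm, Finset.sum_sub_distrib, Finset.sum_add_distrib,
    Finset.mul_sum, Fintype.sum_prod_type, Fin.sum_univ_two, Finset.sum_const, Finset.card_univ,
    ← Nat.cast_smul_eq_nsmul R]

theorem dualLefschetz_lefschetz {p : ℕ} {x : ExteriorAlgebra R M} (hx : x ∈ ⋀[R]^p M) :
    dualLefschetz b (lefschetz b x) =
      lefschetz b (dualLefschetz b x) + ((Fintype.card κ : R) - p) • x := by
  rw [lefschetz_apply, lefschetz_apply, dualLefschetz_darbouxForm_mul,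
    sum_ι_mul_contractLeft_coord b hx, sub_smul]
  abel

theorem dualLefschetz_lefschetz_pow {p : ℕ} {x : ExteriorAlgebra R M} (hx : x ∈ ⋀[R]^p M)
    (m : ℕ) : dualLefschetz b ((lefschetz b ^ (m + 1)) x) =
      (lefschetz b ^ (m + 1)) (dualLefschetz b x)
        + (((m : R) + 1) * ((Fintype.card κ : R) - p - m)) • (lefschetz b ^ m) x := by
  induction m generalizing p x with
  | zero =>
    rw [zero_add, pow_one, pow_zero, dualLefschetz_lefschetz b hx]
    simp
  | succ m ih =>
    have hLx := lefschetz_pow_mem b hx 1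
    rw [pow_one] at hLx
    rw [pow_succ, Module.End.mul_apply, ih hLx, dualLefschetz_lefschetz b hx, map_add, map_smul,
      ← Module.End.mul_apply, ← pow_succ, ← Module.End.mul_apply (lefschetz b ^ m), ← pow_succ]
    push_cast
    module

end Darboux

end CommRing

section Field

variable {K M : Type*} [Field K] [AddCommGroup M] [Module K M]

theorem finrank_exteriorPower {I : Type*} [Fintype I] (e : Basis I K M) (p : ℕ) :
    finrank K (⋀[K]^p M) = (Fintype.card I).choose p := by
  have := Module.Finite.of_basis e
  have := Module.Free.of_basis e
  rw [exteriorPower.finrank_eq, finrank_eq_card_basis e]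

theorem exteriorPower_eq_bot_of_card_lt {I : Type*} [Fintype I] (e : Basis I K M) {p : ℕ}
    (hp : Fintype.card I < p) : ⋀[K]^p M = ⊥ := by
  have := Module.Finite.of_basis e
  rw [← Submodule.finrank_eq_zero, finrank_exteriorPower e, Nat.choose_eq_zero_of_lt hp]

variable [CharZero K] {κ : Type*} [Fintype κ] (b : Basis (κ × Fin 2) K M)

theorem eq_zero_of_lefschetz_pow_apply_eq_zero {p s : ℕ} (h : p + s ≤ Fintype.card κ)
    {x : ExteriorAlgebra K M} (hx : x ∈ ⋀[K]^p M) (hLx : (lefschetz b ^ s) x = 0) : x = 0 := by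
  induction p using Nat.strong_induction_on generalizing s x with
  | _ p ihp =>
  induction s with
  | zero => simpa using hLx
  | succ s ihs =>
    -- `Λ L^(s+1) x = 0` gives `L^(s+1) Λx = -c L^s x`, so `L^(s+2) Λx = 0` and `Λx = 0` by
    -- induction on the degree; then `c L^s x = 0` with `c ≠ 0`.
    have key := dualLefschetz_lefschetz_pow b hx s
    rw [hLx, map_zero] at key
    have hΛx : dualLefschetz b x = 0 := by
      rcases le_or_gt p 1 with hp | hp
      · exact dualLefschetz_eq_zero b hp hx
      obtain ⟨q, rfl⟩ : ∃ q, p = q + 2 := ⟨p - 2, by omega⟩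
      refine ihp q (by omega) (s := s + 2) (by omega) (dualLefschetz_mem b hx) ?_
      have := congrArg (lefschetz b) key
      rwa [map_zero, map_add, map_smul, ← Module.End.mul_apply (lefschetz b), ← pow_succ',
        ← Module.End.mul_apply (lefschetz b), ← pow_succ', hLx, smul_zero, add_zero,
        eq_comm] at this
    have hc : ((s : K) + 1) * ((Fintype.card κ : K) - p - s) ≠ 0 := by
      refine mul_ne_zero (Nat.cast_add_one_ne_zero s) ?_
      rw [sub_sub, sub_ne_zero]
      exact_mod_cast (by omega : Fintype.card κ ≠ p + s)
    rw [hΛx, map_zero, zero_add, eq_comm, smul_eq_zero] at key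
    exact ihs (by omega) (key.resolve_left hc)

theorem lefschetz_pow_injOn {p s : ℕ} (h : p + s ≤ Fintype.card κ) :
    Set.InjOn (lefschetz b ^ s) (⋀[K]^p M) := fun x hx y hy hxy =>
  sub_eq_zero.mp <| eq_zero_of_lefschetz_pow_apply_eq_zero b h (sub_mem hx hy) <| by
    rw [map_sub, hxy, sub_self]

theorem lefschetz_pow_surjOn_of_add_eq {p s : ℕ} (h : p + s = Fintype.card κ) :
    Set.SurjOn (lefschetz b ^ s) (⋀[K]^p M) (⋀[K]^(p + 2 * s) M) := by
  have := Module.Finite.of_basis b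
  refine LinearMap.surjOn_of_injOn_of_finrank_eq _ (fun x hx => lefschetz_pow_mem b hx s)
    (lefschetz_pow_injOn b h.le) ?_
  rw [finrank_exteriorPower b, finrank_exteriorPower b]
  exact Nat.choose_symm_of_eq_add (by simp; omega)

theorem lefschetz_pow_surjOn {p s : ℕ} (h : Fintype.card κ ≤ p + s) :
    Set.SurjOn (lefschetz b ^ s) (⋀[K]^p M) (⋀[K]^(p + 2 * s) M) := by
  rcases lt_or_ge (2 * Fintype.card κ) (p + 2 * s) with hbig | hle
  · intro θ hθ
    rw [SetLike.mem_coe, exteriorPower_eq_bot_of_card_lt b (by simpa [mul_comm] using hbig),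
      Submodule.mem_bot] at hθ
    exact ⟨0, zero_mem _, by rw [map_zero, hθ]⟩
  -- `L ^ s` is the tail of the bijection `L ^ (s + r) : ⋀^q → ⋀^(2n - q)` with `q + s + r = n`
  obtain ⟨q, r, rfl, hqsr⟩ : ∃ q r, p = q + 2 * r ∧ q + (s + r) = Fintype.card κ :=
    ⟨2 * Fintype.card κ - p - 2 * s, p + s - Fintype.card κ, by omega, by omega⟩
  intro θ hθ
  obtain ⟨σ, hσ, rfl⟩ := lefschetz_pow_surjOn_of_add_eq b hqsr
    (show θ ∈ ⋀[K]^(q + 2 * (s + r)) M by rwa [show q + 2 * (s + r) = q + 2 * r + 2 * s by omega])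
  exact ⟨(lefschetz b ^ r) σ, lefschetz_pow_mem b hσ r, by rw [pow_add, Module.End.mul_apply]⟩

end Field

end ExteriorAlgebra

theorem lefschetz_injective_and_surjective
    (n k : ℕ) (V : Type) [AddCommGroup V] [Module ℝ V]
    (f : Module.Basis (Fin (2 * n)) ℝ (Module.Dual ℝ V))
    (ω : ExteriorAlgebra ℝ (Module.Dual ℝ V))
    (hω : ω = ∑ i : Fin n,
      ExteriorAlgebra.ι ℝ (f ⟨2 * i.1, by have := i.2; omega⟩) *
      ExteriorAlgebra.ι ℝ (f ⟨2 * i.1 + 1, by have := i.2; omega⟩)) :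
    (k + 1 ≤ n →
      Set.InjOn (fun η => ω * η) (⋀[ℝ]^k (Module.Dual ℝ V) : Set (ExteriorAlgebra ℝ (Module.Dual ℝ V)))) ∧
    (n ≤ k + 1 →
      Set.SurjOn (fun η => ω * η) (⋀[ℝ]^k (Module.Dual ℝ V) : Set (ExteriorAlgebra ℝ (Module.Dual ℝ V)))
        (⋀[ℝ]^(k + 2) (Module.Dual ℝ V) : Set (ExteriorAlgebra ℝ (Module.Dual ℝ V)))) := by
  -- `finProdFinEquiv (j, a) = a + 2 * j`, so `b (j, 0) = f ⟨2j⟩` and `b (j, 1) = f ⟨2j + 1⟩`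
  let b := f.reindex (finProdFinEquiv.trans (finCongr (Nat.mul_comm n 2))).symm
  have hL : (fun η => ω * η) = ⇑(lefschetz b ^ 1) := by
    ext η
    rw [pow_one, lefschetz_apply, hω, darbouxForm]
    congr 2
    ext j
    simp only [b, Basis.reindex_apply, Equiv.symm_symm]
    congr 3 <;> ext <;> simp [finProdFinEquiv]; omega
  have hcard : Fintype.card (Fin n) = n := Fintype.card_fin n
  rw [hL]
  exact ⟨fun hk => lefschetz_pow_injOn b (by omega),
    fun hk => lefschetz_pow_surjOn b (by omega)⟩
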